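/- arXiv:2603.16950 — 2 statements merged into one kernel-verified Lean document; each statement's English description precedes it below -/
import Mathlib

section
/- (Local equivalence of VSKs with Paciorek–Schervish kernels.) Let d ≥ 1, ℓ > 0, and let ψ : ℝ^d → ℝ be continuously differentiable (C¹). Define the matrix fields M(x) = I + ∇ψ(x)∇ψ(x)ᵀ and Σ(x) = ℓ² M(x)^{-1} (M(x) is symmetric positive definite, hence invertible). Then for each fixed x ∈ ℝ^d, as h → 0, hᵀ (½(Σ(x) + Σ(x+h)))^{-1} h = (1/ℓ²) hᵀ M̄(x, x+h) h + o(‖h‖₂²), where M̄(x, x') = I + ½(∇ψ(x)∇ψ(x)ᵀ + ∇ψ(x')∇ψ(x')ᵀ). -/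
/-!
Both matrix fields `z ↦ (½(Σ(x) + Σ(z)))⁻¹` and `z ↦ ℓ⁻² M̄(x, z)` are continuous at `x`
(`∇ψ` is continuous, and `M(z)`, hence `Σ(z)`, is positive definite, so the inverses are taken at
invertible matrices), and both equal `ℓ⁻² M(x)` at `z = x`. Their difference `A(h)` at `z = x + h`
therefore tends to `0`, and `|hᵀ A(h) h| ≤ ‖A(h)‖₂ ‖h‖²` makes the quadratic form `o(‖h‖²)`.
-/

open scoped Topology Matrix
open Filter Asymptotics

theorem ContDiff.continuous_gradient {E : Type*} [NormedAddCommGroup E] [InnerProductSpace ℝ E]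
    [CompleteSpace E] {f : E → ℝ} (hf : ContDiff ℝ 1 f) : Continuous (gradient f) :=
  (InnerProductSpace.toDual ℝ E).symm.continuous.comp (hf.continuous_fderiv one_ne_zero)

variable {n : Type*} [Fintype n] [DecidableEq n]

theorem ContinuousAt.matrix_inv {X 𝕜 : Type*} [TopologicalSpace X] [NormedField 𝕜]
    {A : X → Matrix n n 𝕜} {x : X} (hA : ContinuousAt A x) (hdet : (A x).det ≠ 0) :
    ContinuousAt (fun z => (A z)⁻¹) x := by
  refine (continuousAt_matrix_inv _ ?_).comp hA
  simpa [Ring.inverse_eq_inv'] using continuousAt_inv₀ hdet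

namespace Matrix

theorem posDef_one_add_vecMulVec_self (v : n → ℝ) : (1 + vecMulVec v v).PosDef :=
  PosDef.one.add_posSemidef (by simpa using posSemidef_vecMulVec_self_star v)

theorem inv_smul_nonsing_inv {K : Type*} [Field K] {A : Matrix n n K} {c : K} (hc : c ≠ 0)
    (hA : IsUnit A.det) : (c • A⁻¹)⁻¹ = c⁻¹ • A :=
  inv_eq_left_inv <| by
    rw [smul_mul_smul_comm, inv_mul_cancel₀ hc, one_smul, mul_nonsing_inv _ hA]

section L2

open scoped Matrix.Norms.L2Operator

theorem abs_dotProduct_mulVec_le (A : Matrix n n ℝ) (v : EuclideanSpace ℝ n) :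
    |v.ofLp ⬝ᵥ A *ᵥ v.ofLp| ≤ ‖A‖ * ‖v‖ ^ 2 := by
  calc |v.ofLp ⬝ᵥ A *ᵥ v.ofLp|
        = |inner ℝ ((EuclideanSpace.equiv n ℝ).symm (A *ᵥ v.ofLp)) v| := by
        rw [EuclideanSpace.inner_eq_star_dotProduct]; simp
    _ ≤ ‖(EuclideanSpace.equiv n ℝ).symm (A *ᵥ v.ofLp)‖ * ‖v‖ := abs_real_inner_le_norm _ _
    _ ≤ ‖A‖ * ‖v‖ * ‖v‖ := by gcongr; exact l2_opNorm_mulVec A v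
    _ = ‖A‖ * ‖v‖ ^ 2 := by ring

theorem isLittleO_dotProduct_mulVec {α : Type*} {l : Filter α} {A : α → Matrix n n ℝ}
    (hA : Tendsto A l (𝓝 0)) (u : α → EuclideanSpace ℝ n) :
    (fun a => (u a).ofLp ⬝ᵥ A a *ᵥ (u a).ofLp) =o[l] fun a => ‖u a‖ ^ 2 := by
  have hbound : (fun a => (u a).ofLp ⬝ᵥ A a *ᵥ (u a).ofLp) =O[l] fun a => ‖A a‖ * ‖u a‖ ^ 2 :=
    .of_bound' (.of_forall fun a => by
      simpa [abs_of_nonneg (by positivity : 0 ≤ ‖A a‖ * ‖u a‖ ^ 2)] using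
        abs_dotProduct_mulVec_le (A a) (u a))
  refine hbound.trans_isLittleO ?_
  simpa using
    ((isLittleO_one_iff ℝ).2 hA).norm_left.mul_isBigO (isBigO_refl (fun a => ‖u a‖ ^ 2) l)

end L2

theorem isLittleO_dotProduct_mulVec_sub {A B : EuclideanSpace ℝ n → Matrix n n ℝ}
    {x : EuclideanSpace ℝ n} (hA : ContinuousAt A x) (hB : ContinuousAt B x) (hAB : A x = B x) :
    (fun h : EuclideanSpace ℝ n => h.ofLp ⬝ᵥ A (x + h) *ᵥ h.ofLp - h.ofLp ⬝ᵥ B (x + h) *ᵥ h.ofLp)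
      =o[𝓝 0] fun h => ‖h‖ ^ 2 := by
  have hdiff : Tendsto (A - B) (𝓝 x) (𝓝 0) := by
    simpa [hAB] using (hA.sub hB).tendsto
  have hshift : Tendsto (x + ·) (𝓝 0) (𝓝 x) := by
    simpa using (continuous_const_add x).tendsto 0
  simp only [← dotProduct_sub, ← sub_mulVec]
  exact isLittleO_dotProduct_mulVec (hdiff.comp hshift) id

end Matrix

open Matrix in
theorem stmt_9_general (d : ℕ) (ℓ : ℝ) (hℓ : 0 < ℓ)
    (ψ : EuclideanSpace ℝ (Fin d) → ℝ) (hψ : ContDiff ℝ 1 ψ)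
    (M Sig : EuclideanSpace ℝ (Fin d) → Matrix (Fin d) (Fin d) ℝ)
    (Mbar : EuclideanSpace ℝ (Fin d) → EuclideanSpace ℝ (Fin d) →
      Matrix (Fin d) (Fin d) ℝ)
    (hM : ∀ z, M z = 1 + Matrix.vecMulVec (fun i => gradient ψ z i)
      (fun i => gradient ψ z i))
    (hSig : ∀ z, Sig z = ℓ ^ 2 • (M z)⁻¹)
    (hMbar : ∀ z z', Mbar z z' = 1 + (1 / 2 : ℝ) •
      (Matrix.vecMulVec (fun i => gradient ψ z i) (fun i => gradient ψ z i)
        + Matrix.vecMulVec (fun i => gradient ψ z' i) (fun i => gradient ψ z' i)))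
    (x : EuclideanSpace ℝ (Fin d)) :
    (fun h : EuclideanSpace ℝ (Fin d) =>
        dotProduct (fun i => h i)
          ((((1 / 2 : ℝ) • (Sig x + Sig (x + h)))⁻¹).mulVec fun i => h i)
          - (1 / ℓ ^ 2) * dotProduct (fun i => h i)
              ((Mbar x (x + h)).mulVec fun i => h i))
      =o[𝓝 0] fun h : EuclideanSpace ℝ (Fin d) => ‖h‖ ^ 2 := by
  have hvv : Continuous fun z => vecMulVec (gradient ψ z).ofLp (gradient ψ z).ofLp := by
    have := (PiLp.continuous_ofLp 2 _).comp hψ.continuous_gradient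
    exact this.matrix_vecMulVec this
  have hMpd : ∀ z, (M z).PosDef := fun z => hM z ▸ posDef_one_add_vecMulVec_self _
  have hSigpd : ∀ z, (Sig z).PosDef := fun z => hSig z ▸ (hMpd z).inv.smul (by positivity)
  have hSigcont : Continuous Sig := by
    have hMcont : Continuous M := by
      rw [funext hM]; exact continuous_const.add hvv
    rw [funext hSig, continuous_iff_continuousAt]
    exact fun z => (hMcont.continuousAt.matrix_inv (hMpd z).det_pos.ne').fun_const_smul _
  have hmid : (1 / 2 : ℝ) • (Sig x + Sig x) = Sig x := by
    rw [← two_smul ℝ, smul_smul]; norm_num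
  have hMbarxx : Mbar x x = M x := by
    rw [hMbar, hM, ← two_smul ℝ (vecMulVec _ _), smul_smul]; norm_num
  have hA : ContinuousAt (fun z => ((1 / 2 : ℝ) • (Sig x + Sig z))⁻¹) x :=
    ContinuousAt.matrix_inv (by fun_prop) (by simp only [hmid]; exact (hSigpd x).det_pos.ne')
  have hB : ContinuousAt (fun z => (1 / ℓ ^ 2) • Mbar x z) x := by
    have hMbarx : Continuous (Mbar x) := by
      rw [funext (hMbar x)]
      exact continuous_const.fun_add ((continuous_const.fun_add hvv).fun_const_smul _)
    exact (hMbarx.fun_const_smul _).continuousAt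
  have hAB : ((1 / 2 : ℝ) • (Sig x + Sig x))⁻¹ = (1 / ℓ ^ 2) • Mbar x x := by
    rw [hmid, hSig, hMbarxx, inv_smul_nonsing_inv (by positivity) (hMpd x).det_pos.ne'.isUnit,
      one_div]
  simpa [smul_mulVec, dotProduct_smul] using isLittleO_dotProduct_mulVec_sub hA hB hAB

/-- Local equivalence of VSKs with Paciorek–Schervish kernels: for
`ψ : ℝ^d → ℝ` of class `C¹`, with `M(x) = I + ∇ψ(x)∇ψ(x)ᵀ` and `Σ(x) = ℓ² M(x)⁻¹`,
one has, as `h → 0`,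
`hᵀ(½(Σ(x)+Σ(x+h)))⁻¹ h = (1/ℓ²) hᵀ M̄(x,x+h) h + o(‖h‖²)`, where
`M̄(x,x') = I + ½(∇ψ(x)∇ψ(x)ᵀ + ∇ψ(x')∇ψ(x')ᵀ)`. -/
theorem stmt_9 (d : ℕ) (hd : 1 ≤ d) (ℓ : ℝ) (hℓ : 0 < ℓ)
    (ψ : EuclideanSpace ℝ (Fin d) → ℝ) (hψ : ContDiff ℝ 1 ψ)
    (M Sig : EuclideanSpace ℝ (Fin d) → Matrix (Fin d) (Fin d) ℝ)
    (Mbar : EuclideanSpace ℝ (Fin d) → EuclideanSpace ℝ (Fin d) →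
      Matrix (Fin d) (Fin d) ℝ)
    (hM : ∀ z, M z = 1 + Matrix.vecMulVec (fun i => gradient ψ z i)
      (fun i => gradient ψ z i))
    (hSig : ∀ z, Sig z = ℓ ^ 2 • (M z)⁻¹)
    (hMbar : ∀ z z', Mbar z z' = 1 + (1 / 2 : ℝ) •
      (Matrix.vecMulVec (fun i => gradient ψ z i) (fun i => gradient ψ z i)
        + Matrix.vecMulVec (fun i => gradient ψ z' i) (fun i => gradient ψ z' i)))
    (x : EuclideanSpace ℝ (Fin d)) :
    (fun h : EuclideanSpace ℝ (Fin d) =>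
        dotProduct (fun i => h i)
          ((((1 / 2 : ℝ) • (Sig x + Sig (x + h)))⁻¹).mulVec fun i => h i)
          - (1 / ℓ ^ 2) * dotProduct (fun i => h i)
              ((Mbar x (x + h)).mulVec fun i => h i))
      =o[𝓝 0] fun h : EuclideanSpace ℝ (Fin d) => ‖h‖ ^ 2 :=
  stmt_9_general d ℓ hℓ ψ hψ M Sig Mbar hM hSig hMbar x
end

section
/- (Bounds on the VSK power function.) Let N ≥ 1 and let K, K^Ψ be symmetric positive definite N×N real matrices, let k, k^Ψ ∈ ℝ^N, and let κ₀ ∈ ℝ. Assume ‖k^Ψ‖₂ ≤ ‖k‖₂, λ_min(K^Ψ) ≥ λ_min(K), and λ_max(K^Ψ) ≤ λ_max(K), where λ_min and λ_max denote the smallest and largest eigenvalues. Then κ₀ − ‖k‖₂² / λ_min(K) ≤ κ₀ − (k^Ψ)ᵀ (K^Ψ)^{-1} k^Ψ ≤ κ₀ − ‖k^Ψ‖₂² / λ_max(K). -/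
/-!
Both bounds are Rayleigh–Ritz bounds for `(K^Ψ)⁻¹`: in the Loewner order
`λ_max(K^Ψ)⁻¹ • 1 ≤ (K^Ψ)⁻¹ ≤ λ_min(K^Ψ)⁻¹ • 1`, because the spectrum of `(K^Ψ)⁻¹` consists of the
reciprocals of the eigenvalues of `K^Ψ`. The eigenvalue and norm comparisons with `K` and `k` then
only move the denominators and numerators in the right direction.
-/

open Matrix
open scoped MatrixOrder

namespace Matrix

variable {n : Type*} [Fintype n]

lemma dotProduct_mulVec_mono {B C : Matrix n n ℝ} (h : B ≤ C) (v : n → ℝ) :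
    v ⬝ᵥ (B *ᵥ v) ≤ v ⬝ᵥ (C *ᵥ v) := by
  have := (le_iff.mp h).dotProduct_mulVec_nonneg v
  rwa [star_trivial, sub_mulVec, dotProduct_sub, sub_nonneg] at this

variable [DecidableEq n]

lemma dotProduct_algebraMap_mulVec (r : ℝ) (v : n → ℝ) :
    v ⬝ᵥ (algebraMap ℝ (Matrix n n ℝ) r *ᵥ v) = r * ∑ i, v i ^ 2 := by
  simp only [algebraMap_eq_diagonal, Pi.algebraMap_apply, Algebra.algebraMap_self,
    RingHom.id_apply, mulVec_diagonal, dotProduct, Finset.mul_sum]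
  exact Finset.sum_congr rfl fun i _ => by ring

lemma IsHermitian.dotProduct_mulVec_le {B : Matrix n n ℝ} (hB : B.IsHermitian) {r : ℝ}
    (h : ∀ x ∈ spectrum ℝ B, x ≤ r) (v : n → ℝ) :
    v ⬝ᵥ (B *ᵥ v) ≤ r * ∑ i, v i ^ 2 :=
  dotProduct_algebraMap_mulVec r v ▸
    dotProduct_mulVec_mono (le_algebraMap_of_spectrum_le h hB.isSelfAdjoint) v

lemma IsHermitian.le_dotProduct_mulVec {B : Matrix n n ℝ} (hB : B.IsHermitian) {r : ℝ}
    (h : ∀ x ∈ spectrum ℝ B, r ≤ x) (v : n → ℝ) :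
    r * ∑ i, v i ^ 2 ≤ v ⬝ᵥ (B *ᵥ v) :=
  dotProduct_algebraMap_mulVec r v ▸
    dotProduct_mulVec_mono (algebraMap_le_of_le_spectrum h hB.isSelfAdjoint) v

lemma PosDef.spectrum_inv {A : Matrix n n ℝ} (hA : A.PosDef) :
    spectrum ℝ A⁻¹ = (spectrum ℝ A)⁻¹ := by
  obtain ⟨u, rfl⟩ := hA.isUnit
  rw [← coe_units_inv, spectrum.map_inv]

lemma PosDef.sum_sq_div_iSup_le_dotProduct_inv_mulVec {A : Matrix n n ℝ} (hA : A.PosDef)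
    (v : n → ℝ) :
    (∑ i, v i ^ 2) / (⨆ i, hA.1.eigenvalues i) ≤ v ⬝ᵥ (A⁻¹ *ᵥ v) := by
  rw [div_eq_inv_mul]
  refine hA.inv.1.le_dotProduct_mulVec (fun x hx => ?_) v
  rw [hA.spectrum_inv, hA.1.spectrum_real_eq_range_eigenvalues] at hx
  obtain ⟨i, hi⟩ := hx
  rw [← inv_inv x, ← hi]
  exact inv_anti₀ (hA.eigenvalues_pos i) (le_ciSup (Set.finite_range _).bddAbove i)

variable [Nonempty n]

lemma PosDef.iInf_eigenvalues_pos {A : Matrix n n ℝ} (hA : A.PosDef) :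
    0 < ⨅ i, hA.1.eigenvalues i := by
  obtain ⟨j, hj⟩ := exists_eq_ciInf_of_finite (f := hA.1.eigenvalues)
  exact hj ▸ hA.eigenvalues_pos j

lemma PosDef.iSup_eigenvalues_pos {A : Matrix n n ℝ} (hA : A.PosDef) :
    0 < ⨆ i, hA.1.eigenvalues i :=
  hA.iInf_eigenvalues_pos.trans_le (ciInf_le_ciSup (Set.finite_range _).bddBelow
    (Set.finite_range _).bddAbove)

lemma PosDef.dotProduct_inv_mulVec_le_sum_sq_div_iInf {A : Matrix n n ℝ} (hA : A.PosDef)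
    (v : n → ℝ) :
    v ⬝ᵥ (A⁻¹ *ᵥ v) ≤ (∑ i, v i ^ 2) / (⨅ i, hA.1.eigenvalues i) := by
  rw [div_eq_inv_mul]
  refine hA.inv.1.dotProduct_mulVec_le (fun x hx => ?_) v
  rw [hA.spectrum_inv, hA.1.spectrum_real_eq_range_eigenvalues] at hx
  obtain ⟨i, hi⟩ := hx
  rw [← inv_inv x, ← hi]
  exact inv_anti₀ hA.iInf_eigenvalues_pos (ciInf_le (Set.finite_range _).bddBelow i)

end Matrix

/-- Bounds on the VSK power function: if `K, K^Ψ` are symmetric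
positive definite `N×N` matrices with `‖k^Ψ‖₂ ≤ ‖k‖₂`, `λ_min(K^Ψ) ≥ λ_min(K)` and
`λ_max(K^Ψ) ≤ λ_max(K)`, then
`κ₀ − ‖k‖₂²/λ_min(K) ≤ κ₀ − (k^Ψ)ᵀ(K^Ψ)⁻¹k^Ψ ≤ κ₀ − ‖k^Ψ‖₂²/λ_max(K)`. -/
theorem stmt_11 (N : ℕ) (hN : 1 ≤ N)
    (K KΨ : Matrix (Fin N) (Fin N) ℝ) (hK : K.PosDef) (hKΨ : KΨ.PosDef)
    (k kΨ : Fin N → ℝ) (κ₀ : ℝ)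
    (hk : Real.sqrt (∑ i, kΨ i ^ 2) ≤ Real.sqrt (∑ i, k i ^ 2))
    (hmin : (⨅ i, hK.1.eigenvalues i) ≤ ⨅ i, hKΨ.1.eigenvalues i)
    (hmax : (⨆ i, hKΨ.1.eigenvalues i) ≤ ⨆ i, hK.1.eigenvalues i) :
    κ₀ - (∑ i, k i ^ 2) / (⨅ i, hK.1.eigenvalues i)
        ≤ κ₀ - dotProduct kΨ ((KΨ)⁻¹.mulVec kΨ) ∧
      κ₀ - dotProduct kΨ ((KΨ)⁻¹.mulVec kΨ)
        ≤ κ₀ - (∑ i, kΨ i ^ 2) / (⨆ i, hK.1.eigenvalues i) := by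
  have : Nonempty (Fin N) := ⟨⟨0, hN⟩⟩
  have hk2 : ∑ i, kΨ i ^ 2 ≤ ∑ i, k i ^ 2 := (Real.sqrt_le_sqrt_iff (by positivity)).mp hk
  constructor <;> apply sub_le_sub_left
  · calc kΨ ⬝ᵥ (KΨ⁻¹ *ᵥ kΨ)
        ≤ (∑ i, kΨ i ^ 2) / (⨅ i, hKΨ.1.eigenvalues i) :=
          hKΨ.dotProduct_inv_mulVec_le_sum_sq_div_iInf kΨ
      _ ≤ (∑ i, kΨ i ^ 2) / (⨅ i, hK.1.eigenvalues i) := by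
          gcongr
          exact hK.iInf_eigenvalues_pos
      _ ≤ (∑ i, k i ^ 2) / (⨅ i, hK.1.eigenvalues i) := by
          gcongr
          exact hK.iInf_eigenvalues_pos.le
  · calc (∑ i, kΨ i ^ 2) / (⨆ i, hK.1.eigenvalues i)
        ≤ (∑ i, kΨ i ^ 2) / (⨆ i, hKΨ.1.eigenvalues i) := by
          gcongr
          exact hKΨ.iSup_eigenvalues_pos
      _ ≤ kΨ ⬝ᵥ (KΨ⁻¹ *ᵥ kΨ) := hKΨ.sum_sq_div_iSup_le_dotProduct_inv_mulVec kΨ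
end
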